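/- arXiv:1902.05478 — 7 statements merged into one kernel-verified Lean document; each statement's English description precedes it below -/
import Mathlib

section
/- Let K ≥ 2 be an integer and let S_K = { exp(2πi k / K) : k = 0, 1, …, K−1 } be the set of K-th roots of unity. Let z be a nonzero complex number and suppose u ∈ S_K satisfies |arg(z · conj u)| < π/K. Then for every v ∈ S_K with v ≠ u, Re(conj(u) · z) > Re(conj(v) · z). (In other words, the complex-valued signum function csgn, which maps z to the unique K-th root of unity u with |arg(z · conj u)| < π/K, is a B-projection function with respect to the bilinear form B(p,q) = Re(conj(p) · q).) -/
/-!
With `w = z * conj u`, the quotient `ζ = u / v` is a nontrivial `K`-th root of unity and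
`conj v * z = ζ * w`, so the claim is `Re (ζ w) < Re w`. Writing `ζ = exp (2π i r / K)` with
`0 < r < K`, the angle `arg w + 2π r / K` lies in `(π / K, 2π - π / K)`, where the cosine is
below `cos (π / K) < cos (arg w)`.
-/

open Complex
open scoped Real

theorem Real.cos_add_lt_cos_of_abs_lt {c θ φ : ℝ} (hc : c ≤ π) (hθ : |θ| < c)
    (hφ : 2 * c ≤ φ) (hφ' : φ ≤ 2 * π - 2 * c) : Real.cos (θ + φ) < Real.cos θ := by
  have hc₀ : 0 < c := (abs_nonneg θ).trans_lt hθ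
  obtain ⟨hθ₁, hθ₂⟩ := abs_lt.mp hθ
  have hcos_c : Real.cos c < Real.cos θ := by
    rw [← Real.cos_abs θ]
    exact Real.cos_lt_cos_of_nonneg_of_le_pi (abs_nonneg θ) hc hθ
  refine lt_trans ?_ hcos_c
  rcases le_or_gt (θ + φ) π with h | h
  · exact Real.cos_lt_cos_of_nonneg_of_le_pi hc₀.le h (by linarith)
  · rw [← Real.cos_two_pi_sub]
    exact Real.cos_lt_cos_of_nonneg_of_le_pi hc₀.le (by linarith) (by linarith)

theorem Complex.re_exp_ofReal_mul_I_mul (φ : ℝ) (w : ℂ) :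
    (exp (φ * I) * w).re = ‖w‖ * Real.cos (w.arg + φ) := by
  conv_lhs => rw [← norm_mul_exp_arg_mul_I w, mul_left_comm, ← exp_add, ← add_mul,
    ← ofReal_add, add_comm φ, re_ofReal_mul, exp_ofReal_mul_I_re]

theorem Complex.exp_two_pi_I_mul_emod_div (m : ℤ) (K : ℕ) :
    exp (2 * π * I * (m % K : ℤ) / K) = exp (2 * π * I * m / K) := by
  rcases Nat.eq_zero_or_pos K with rfl | hK
  · simp
  have hKℂ : (K : ℂ) ≠ 0 := by exact_mod_cast hK.ne'
  conv_rhs => rw [← Int.emod_add_mul_ediv m K]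
  rw [eq_comm, exp_eq_exp_iff_exists_int]
  exact ⟨m / K, by push_cast; field_simp⟩

theorem Complex.re_exp_mul_lt_re_of_abs_arg_lt {K : ℕ} {w : ℂ} (hw : w ≠ 0)
    (harg : |w.arg| < π / K) {r : ℤ} (hr₀ : 0 < r) (hrK : r < K) :
    (exp (2 * π * I * r / K) * w).re < w.re := by
  have hKℝ : (0 : ℝ) < K := by exact_mod_cast (show (0 : ℤ) < K by omega)
  have hr₁ : (1 : ℝ) ≤ r := by exact_mod_cast hr₀
  have hr₂ : (r : ℝ) ≤ K - 1 := by exact_mod_cast (show r ≤ K - 1 by omega)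
  rw [show 2 * π * I * r / K = ((2 * π * r / K : ℝ) : ℂ) * I by push_cast; ring,
    re_exp_ofReal_mul_I_mul, ← norm_mul_cos_arg w]
  refine mul_lt_mul_of_pos_left ?_ (norm_pos_iff.mpr hw)
  refine Real.cos_add_lt_cos_of_abs_lt (c := π / K) ?_ harg ?_ ?_
  · exact div_le_self Real.pi_pos.le (by linarith)
  · rw [mul_div_assoc', div_le_div_iff_of_pos_right hKℝ]
    nlinarith [Real.pi_pos]
  · rw [show 2 * π - 2 * (π / K) = 2 * π * (K - 1) / K by field_simp]
    gcongr

theorem Complex.re_exp_mul_lt_re_of_not_dvd {K : ℕ} {w : ℂ} (hw : w ≠ 0)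
    (harg : |w.arg| < π / K) {m : ℤ} (hm : ¬ (K : ℤ) ∣ m) :
    (exp (2 * π * I * m / K) * w).re < w.re := by
  have hK : (0 : ℤ) < K := by
    rcases Nat.eq_zero_or_pos K with rfl | hK
    · simp only [Nat.cast_zero, div_zero] at harg
      exact absurd harg (abs_nonneg _).not_gt
    · exact_mod_cast hK
  rw [← exp_two_pi_I_mul_emod_div]
  refine re_exp_mul_lt_re_of_abs_arg_lt hw harg ?_ (Int.emod_lt_of_pos m hK)
  exact lt_of_le_of_ne (Int.emod_nonneg m hK.ne') fun h => hm (Int.dvd_of_emod_eq_zero h.symm)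

theorem Complex.conj_exp_two_pi_I_mul_div (k K : ℕ) :
    starRingEnd ℂ (exp (2 * π * I * k / K)) = exp (-(2 * π * I * k / K)) := by
  rw [← exp_conj]
  simp [conj_I, map_ofNat, neg_div]

theorem csgn_is_B_projection_general (K : ℕ) (z u : ℂ) (hz : z ≠ 0)
    (hu : u ∈ {w : ℂ | ∃ k : ℕ, k < K ∧
      w = Complex.exp (2 * Real.pi * Complex.I * k / K)})
    (harg : |(z * (starRingEnd ℂ) u).arg| < Real.pi / K) :
    ∀ v ∈ {w : ℂ | ∃ k : ℕ, k < K ∧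
      w = Complex.exp (2 * Real.pi * Complex.I * k / K)}, v ≠ u →
      ((starRingEnd ℂ) v * z).re < ((starRingEnd ℂ) u * z).re := by
  rintro v ⟨l, hl, rfl⟩ hvu
  obtain ⟨k, hk, rfl⟩ := hu
  have hkl : ¬ (K : ℤ) ∣ (k - l : ℤ) := fun h => hvu <| by
    rw [Int.eq_zero_of_dvd_of_natAbs_lt_natAbs h (by omega) |> sub_eq_zero.mp |> Int.ofNat_inj.mp]
  have hw : z * starRingEnd ℂ (exp (2 * π * I * k / K)) ≠ 0 :=
    mul_ne_zero hz (by rw [conj_exp_two_pi_I_mul_div]; exact exp_ne_zero _)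
  have hrot : starRingEnd ℂ (exp (2 * π * I * l / K)) * z =
      exp (2 * π * I * ((k - l : ℤ) : ℂ) / K) * (z * starRingEnd ℂ (exp (2 * π * I * k / K))) := by
    rw [conj_exp_two_pi_I_mul_div, conj_exp_two_pi_I_mul_div, mul_left_comm, ← exp_add]
    push_cast
    ring_nf
  rw [hrot, mul_comm _ z]
  exact re_exp_mul_lt_re_of_not_dvd hw harg hkl

theorem csgn_is_B_projection (K : ℕ) (hK : 2 ≤ K) (z u : ℂ) (hz : z ≠ 0)
    (hu : u ∈ {w : ℂ | ∃ k : ℕ, k < K ∧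
      w = Complex.exp (2 * Real.pi * Complex.I * k / K)})
    (harg : |(z * (starRingEnd ℂ) u).arg| < Real.pi / K) :
    ∀ v ∈ {w : ℂ | ∃ k : ℕ, k < K ∧
      w = Complex.exp (2 * Real.pi * Complex.I * k / K)}, v ≠ u →
      ((starRingEnd ℂ) v * z).re < ((starRingEnd ℂ) u * z).re :=
  csgn_is_B_projection_general K z u hz hu harg
end

section
/- Let D ⊆ ℍ and S ⊆ ℍ, and let f : ℍ → ℍ satisfy f(q) ∈ S for all q ∈ D and the B-projection property: Re(star(f(q)) * q) > Re(star(s) * q) for every q ∈ D and every s ∈ S with s ≠ f(q). Let N ≥ 1 and let (w_ij) be an N×N quaternion matrix with w_ij = star(w_ji) for all i, j, and such that each diagonal entry w_ii is a nonnegative real number (a quaternion with zero imaginary parts and nonnegative real part). Let x ∈ S^N, let μ ∈ {1,…,N}, suppose v_μ = Σⱼ w_μj * xⱼ belongs to D and f(v_μ) ≠ x_μ, and let x′ be obtained from x by replacing x_μ with f(v_μ). Then E(x′) < E(x), where E(x) = −(1/2) Σᵢ Σⱼ Re(star(xᵢ) * (w_ij * xⱼ)). -/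
open Finset

private lemma re_sum' {N : ℕ} (s : Finset (Fin N)) (g : Fin N → Quaternion ℝ) :
    (∑ i ∈ s, g i).re = ∑ i ∈ s, (g i).re :=
  map_sum (AddMonoidHom.mk' (fun q : Quaternion ℝ => q.re) (by simp)) g s

private lemma re_flip (u c p : Quaternion ℝ) :
    (star u * (star c * p)).re = (star p * (c * u)).re := by
  rw [show star p * (c * u) = star (star u * (star c * p)) by simp [star_mul, mul_assoc]]
  simp
  ring

private lemma quad_nonneg (a b : Quaternion ℝ) :
    0 ≤ (star a * a).re - 2 * (star a * b).re + (star b * b).re := by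
  simp only [Quaternion.re_mul, Quaternion.re_star, Quaternion.imI_star,
    Quaternion.imJ_star, Quaternion.imK_star]
  nlinarith [sq_nonneg (a.re - b.re), sq_nonneg (a.imI - b.imI),
    sq_nonneg (a.imJ - b.imJ), sq_nonneg (a.imK - b.imK)]

private lemma sum_split {N : ℕ} (F : Fin N → Fin N → ℝ) (μ : Fin N) :
    ∑ i, ∑ j, F i j =
      F μ μ + (∑ j ∈ univ.erase μ, F μ j) + (∑ i ∈ univ.erase μ, F i μ)
        + ∑ i ∈ univ.erase μ, ∑ j ∈ univ.erase μ, F i j := by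
  rw [← Finset.add_sum_erase _ (fun i => ∑ j, F i j) (mem_univ μ),
      ← Finset.add_sum_erase _ (F μ) (mem_univ μ)]
  have h : ∑ i ∈ univ.erase μ, ∑ j, F i j
      = ∑ i ∈ univ.erase μ, (F i μ + ∑ j ∈ univ.erase μ, F i j) :=
    Finset.sum_congr rfl fun i _ => (Finset.add_sum_erase _ (F i) (mem_univ μ)).symm
  rw [h, Finset.sum_add_distrib]
  ring

theorem energy_strict_decrease_aux : True := trivial

theorem energy_strict_decrease (D S : Set (Quaternion ℝ))
    (f : Quaternion ℝ → Quaternion ℝ)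
    (hfS : ∀ q ∈ D, f q ∈ S)
    (hproj : ∀ q ∈ D, ∀ s ∈ S, s ≠ f q →
      (star s * q).re < (star (f q) * q).re)
    (N : ℕ) (hN : 1 ≤ N)
    (w : Fin N → Fin N → Quaternion ℝ)
    (hsym : ∀ i j, w i j = star (w j i))
    (hdiag : ∀ i, ∃ r : ℝ, 0 ≤ r ∧ w i i = (r : Quaternion ℝ))
    (x : Fin N → Quaternion ℝ) (hx : ∀ i, x i ∈ S) (μ : Fin N)
    (hv : (∑ j, w μ j * x j) ∈ D)
    (hchange : f (∑ j, w μ j * x j) ≠ x μ)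
    (x' : Fin N → Quaternion ℝ)
    (hx'μ : x' μ = f (∑ j, w μ j * x j))
    (hx'rest : ∀ j, j ≠ μ → x' j = x j) :
    (-(1/2 : ℝ) * ∑ i, ∑ j, (star (x' i) * (w i j * x' j)).re) <
      (-(1/2 : ℝ) * ∑ i, ∑ j, (star (x i) * (w i j * x j)).re) := by
  set v : Quaternion ℝ := ∑ j, w μ j * x j with hvdef
  set a : Quaternion ℝ := f v with hadef
  set b : Quaternion ℝ := x μ with hbdef
  obtain ⟨r, hr0, hrw⟩ := hdiag μ
  -- projection strict inequality
  have hΔ : (star b * v).re < (star a * v).re :=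
    hproj v hv b (hx μ) (Ne.symm hchange)
  -- expand (star p * v).re as a sum
  have hexp : ∀ p : Quaternion ℝ, (star p * v).re
      = r * (star p * b).re + ∑ j ∈ univ.erase μ, (star p * (w μ j * x j)).re := by
    intro p
    have h1 : star p * v = ∑ j, star p * (w μ j * x j) := Finset.mul_sum _ _ _
    have h2 : (∑ j, star p * (w μ j * x j)).re = ∑ j, (star p * (w μ j * x j)).re :=
      re_sum' _ _
    rw [h1, h2, ← Finset.add_sum_erase _ _ (mem_univ μ), hrw]
    have : (star p * ((r : Quaternion ℝ) * b)).re = r * (star p * b).re := by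
      simp; ring
    rw [this]
  -- cross sums
  have hcross' : ∑ j ∈ univ.erase μ, (star (x' μ) * (w μ j * x' j)).re
      = ∑ j ∈ univ.erase μ, (star a * (w μ j * x j)).re :=
    Finset.sum_congr rfl fun j hj => by
      rw [hx'μ, hx'rest j (Finset.ne_of_mem_erase hj)]
  have hflip' : ∑ i ∈ univ.erase μ, (star (x' i) * (w i μ * x' μ)).re
      = ∑ i ∈ univ.erase μ, (star a * (w μ i * x i)).re :=
    Finset.sum_congr rfl fun i hi => by
      rw [hx'μ, hx'rest i (Finset.ne_of_mem_erase hi), hsym i μ, re_flip]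
  have hcrossb : ∑ i ∈ univ.erase μ, (star (x i) * (w i μ * x μ)).re
      = ∑ i ∈ univ.erase μ, (star b * (w μ i * x i)).re :=
    Finset.sum_congr rfl fun i hi => by
      rw [hsym i μ, re_flip]
  have hrest : ∑ i ∈ univ.erase μ, ∑ j ∈ univ.erase μ, (star (x' i) * (w i j * x' j)).re
      = ∑ i ∈ univ.erase μ, ∑ j ∈ univ.erase μ, (star (x i) * (w i j * x j)).re :=
    Finset.sum_congr rfl fun i hi => Finset.sum_congr rfl fun j hj => by
      rw [hx'rest i (Finset.ne_of_mem_erase hi), hx'rest j (Finset.ne_of_mem_erase hj)]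
  -- diagonal terms
  have hdiag' : (star (x' μ) * (w μ μ * x' μ)).re = r * (star a * a).re := by
    rw [hx'μ, hrw]; simp; ring
  have hdiagb : (star (x μ) * (w μ μ * x μ)).re = r * (star b * b).re := by
    rw [hrw, ← hbdef]; simp; ring
  -- split both double sums
  rw [sum_split (fun i j => (star (x' i) * (w i j * x' j)).re) μ,
      sum_split (fun i j => (star (x i) * (w i j * x j)).re) μ]
  simp only [hcross', hflip', hcrossb, hrest, hdiag', hdiagb]
  have hCa := hexp a
  have hCb := hexp b
  have hq := quad_nonneg a b
  nlinarith [hΔ, hr0, hq, mul_nonneg hr0 hq]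
end

section
/- (Quaternionic instance of the main stability theorem, case (b).) Let D ⊆ ℍ, let S ⊆ ℍ be a finite set, and let f : ℍ → ℍ satisfy f(q) ∈ S for all q ∈ D and the B-projection property: Re(star(f(q)) * q) > Re(star(s) * q) for every q ∈ D and every s ∈ S with s ≠ f(q). Let N ≥ 1 and let (w_ij) be an N×N quaternion matrix with w_ij = star(w_ji) for all i, j, and with each diagonal entry w_ii a nonnegative real number. Then for every update schedule σ : ℕ → {1,…,N} and every initial state x(0) ∈ S^N, the asynchronous Hopfield trajectory defined by x_i(t+1) = f(v_i(t)) if i = σ(t) and v_i(t) ∈ D, and x_i(t+1) = x_i(t) otherwise, where v_i(t) = Σⱼ w_ij * x_j(t), is eventually constant: there exists T such that x(t) = x(T) for all t ≥ T. -/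
/-!
The energy `E(y) = Re (y* W y)` is a Lyapunov function. Since `W` is Hermitian, changing
neuron `i` from `a` to `b` raises `E` by `2 Re ((b - a)* vᵢ) + wᵢᵢ |b - a|²`, which is positive
whenever `b = f vᵢ ≠ a` by the B-projection property and `wᵢᵢ ≥ 0`. The states stay in the finite
set `Sᴺ`, so `E` takes finitely many values along the trajectory, which can therefore change only
finitely often.
-/

open Matrix Quaternion

theorem Matrix.star_single_dotProduct {ι α : Type*} [Fintype ι] [DecidableEq ι]
    [NonUnitalNonAssocSemiring α] [StarAddMonoid α] (i : ι) (d : α) (v : ι → α) :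
    star (Pi.single i d) ⬝ᵥ v = star d * v i := by
  rw [← Pi.single_star, single_dotProduct]

def IsBProjection (D S : Set ℍ[ℝ]) (f : ℍ[ℝ] → ℍ[ℝ]) : Prop :=
  ∀ q ∈ D, ∀ s ∈ S, s ≠ f q → (star s * q).re < (star (f q) * q).re

section Hopfield
variable {ι : Type*} [Fintype ι]

def IsHopfieldUpdate (w : Matrix ι ι ℍ[ℝ]) (D : Set ℍ[ℝ]) (f : ℍ[ℝ] → ℍ[ℝ]) (i : ι)
    (y y' : ι → ℍ[ℝ]) : Prop :=
  ∀ j, (j = i ∧ (w *ᵥ y) j ∈ D → y' j = f ((w *ᵥ y) j)) ∧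
    (¬(j = i ∧ (w *ᵥ y) j ∈ D) → y' j = y j)

section Energy
variable (w : Matrix ι ι ℍ[ℝ])

noncomputable def hopfieldEnergy (y : ι → ℍ[ℝ]) : ℝ := (star y ⬝ᵥ w *ᵥ y).re

variable {w}

theorem Matrix.IsHermitian.re_star_dotProduct_mulVec_comm (hw : w.IsHermitian)
    (y z : ι → ℍ[ℝ]) : (star y ⬝ᵥ w *ᵥ z).re = (star z ⬝ᵥ w *ᵥ y).re := by
  rw [← re_star, ← star_dotProduct_star, star_star, star_mulVec, ← dotProduct_mulVec, hw.eq]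

theorem hopfieldEnergy_add (hw : w.IsHermitian) (y e : ι → ℍ[ℝ]) :
    hopfieldEnergy w (y + e) =
      hopfieldEnergy w y + 2 * (star e ⬝ᵥ w *ᵥ y).re + hopfieldEnergy w e := by
  simp only [hopfieldEnergy, star_add, mulVec_add, dotProduct_add, add_dotProduct, re_add,
    hw.re_star_dotProduct_mulVec_comm y e]
  ring

variable [DecidableEq ι]

theorem hopfieldEnergy_single {i : ι} {r : ℝ} (hr : w i i = r) (d : ℍ[ℝ]) :
    hopfieldEnergy w (Pi.single i d) = r * normSq d := by
  have : (w *ᵥ Pi.single i d) i = r * d := by simp [mulVec_single, hr]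
  rw [hopfieldEnergy, star_single_dotProduct, this, ← mul_assoc, ← coe_commutes, mul_assoc,
    star_mul_self, ← coe_mul, re_coe]

theorem hopfieldEnergy_update (hw : w.IsHermitian) {i : ι} {r : ℝ} (hr : w i i = r)
    (y : ι → ℍ[ℝ]) (b : ℍ[ℝ]) :
    hopfieldEnergy w (Function.update y i b) = hopfieldEnergy w y +
      2 * ((star b * (w *ᵥ y) i).re - (star (y i) * (w *ᵥ y) i).re) + r * normSq (b - y i) := by
  have : Function.update y i b = y + Pi.single i (b - y i) := by
    ext1 j
    rcases eq_or_ne j i with rfl | h <;> simp [*]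
  rw [this, hopfieldEnergy_add hw, hopfieldEnergy_single hr, star_single_dotProduct, star_sub,
    sub_mul, re_sub]

end Energy

namespace IsHopfieldUpdate

variable [DecidableEq ι] {w : Matrix ι ι ℍ[ℝ]} {D S : Set ℍ[ℝ]} {f : ℍ[ℝ] → ℍ[ℝ]} {i : ι}
  {y y' : ι → ℍ[ℝ]}

open Classical in
theorem eq_ite (h : IsHopfieldUpdate w D f i y y') :
    y' = if (w *ᵥ y) i ∈ D then Function.update y i (f ((w *ᵥ y) i)) else y := by
  ext1 j
  by_cases hj : j = i
  · subst hj
    split_ifs with hD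
    · simpa using (h j).1 ⟨rfl, hD⟩
    · exact (h j).2 (by tauto)
  · have : y' j = y j := (h j).2 (by tauto)
    split_ifs <;> simp [this, hj]

theorem mem (h : IsHopfieldUpdate w D f i y y') (hf : Set.MapsTo f D S) (hy : ∀ j, y j ∈ S)
    (j : ι) : y' j ∈ S := by
  rw [h.eq_ite]
  split_ifs with hD
  · rcases eq_or_ne j i with rfl | hj
    · simpa using hf hD
    · simpa [hj] using hy j
  · exact hy j

theorem hopfieldEnergy_lt (h : IsHopfieldUpdate w D f i y y') (hw : w.IsHermitian)
    {r : ℝ} (hr0 : 0 ≤ r) (hr : w i i = r) (hf : IsBProjection D S f) (hy : y i ∈ S)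
    (hne : y' ≠ y) : hopfieldEnergy w y < hopfieldEnergy w y' := by
  rw [h.eq_ite] at hne ⊢
  split_ifs at hne ⊢ with hD
  · have hchange : f ((w *ᵥ y) i) ≠ y i := fun h' => hne (by rw [h', Function.update_eq_self])
    have hgain := hf _ hD _ hy hchange.symm
    have hself := mul_nonneg hr0 (normSq_nonneg (a := f ((w *ᵥ y) i) - y i))
    rw [hopfieldEnergy_update hw hr]
    linarith
  · exact (hne rfl).elim

end IsHopfieldUpdate

end Hopfield

theorem exists_forall_ge_eq_of_lyapunov {α β : Type*} [LinearOrder β] {x : ℕ → α}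
    (hx : (Set.range x).Finite) {E : α → β} (hE : ∀ t, x (t + 1) ≠ x t → E (x t) < E (x (t + 1))) :
    ∃ T, ∀ t, T ≤ t → x t = x T := by
  have hmono : Monotone (E ∘ x) := monotone_nat_of_le_succ fun t => by
    rcases eq_or_ne (x (t + 1)) (x t) with h | h
    · simp [h]
    · exact (hE t h).le
  obtain ⟨_, ⟨T, rfl⟩, hT⟩ := Set.exists_max_image _ E hx (Set.range_nonempty x)
  have hflat : ∀ t, T ≤ t → E (x t) = E (x T) := fun t ht =>
    le_antisymm (hT _ ⟨t, rfl⟩) (hmono ht)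
  refine ⟨T, Nat.le_induction rfl fun t ht ih => ?_⟩
  by_contra hne
  have := hE t (by rwa [ih])
  rw [hflat t ht, hflat (t + 1) (by omega)] at this
  exact lt_irrefl _ this

theorem quaternionic_hopfield_convergence_general (D S : Set (Quaternion ℝ))
    (hSfin : S.Finite)
    (f : Quaternion ℝ → Quaternion ℝ)
    (hfS : ∀ q ∈ D, f q ∈ S)
    (hproj : ∀ q ∈ D, ∀ s ∈ S, s ≠ f q →
      (star s * q).re < (star (f q) * q).re)
    (N : ℕ)
    (w : Fin N → Fin N → Quaternion ℝ)
    (hsym : ∀ i j, w i j = star (w j i))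
    (hdiag : ∀ i, ∃ r : ℝ, 0 ≤ r ∧ w i i = (r : Quaternion ℝ))
    (σ : ℕ → Fin N) (x : ℕ → Fin N → Quaternion ℝ)
    (hx0 : ∀ i, x 0 i ∈ S)
    (hdyn : ∀ t i,
      ((i = σ t ∧ (∑ j, w i j * x t j) ∈ D) →
        x (t + 1) i = f (∑ j, w i j * x t j)) ∧
      (¬(i = σ t ∧ (∑ j, w i j * x t j) ∈ D) →
        x (t + 1) i = x t i)) :
    ∃ T, ∀ t, T ≤ t → x t = x T := by
  have hw : Matrix.IsHermitian w := IsHermitian.ext fun i j => (hsym i j).symm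
  have hupdate (t : ℕ) : IsHopfieldUpdate w D f (σ t) (x t) (x (t + 1)) := hdyn t
  have hxS (t : ℕ) : ∀ i, x t i ∈ S := by
    induction t with
    | zero => exact hx0
    | succ t ih => exact (hupdate t).mem hfS ih
  refine exists_forall_ge_eq_of_lyapunov ((Set.Finite.pi fun _ => hSfin).subset ?_)
    (E := hopfieldEnergy w) fun t hne => ?_
  · rintro _ ⟨t, rfl⟩
    exact fun i _ => hxS t i
  · obtain ⟨r, hr0, hr⟩ := hdiag (σ t)
    exact (hupdate t).hopfieldEnergy_lt hw hr0 hr hproj (hxS t _) hne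

theorem quaternionic_hopfield_convergence (D S : Set (Quaternion ℝ))
    (hSfin : S.Finite)
    (f : Quaternion ℝ → Quaternion ℝ)
    (hfS : ∀ q ∈ D, f q ∈ S)
    (hproj : ∀ q ∈ D, ∀ s ∈ S, s ≠ f q →
      (star s * q).re < (star (f q) * q).re)
    (N : ℕ) (hN : 1 ≤ N)
    (w : Fin N → Fin N → Quaternion ℝ)
    (hsym : ∀ i j, w i j = star (w j i))
    (hdiag : ∀ i, ∃ r : ℝ, 0 ≤ r ∧ w i i = (r : Quaternion ℝ))
    (σ : ℕ → Fin N) (x : ℕ → Fin N → Quaternion ℝ)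
    (hx0 : ∀ i, x 0 i ∈ S)
    (hdyn : ∀ t i,
      ((i = σ t ∧ (∑ j, w i j * x t j) ∈ D) →
        x (t + 1) i = f (∑ j, w i j * x t j)) ∧
      (¬(i = σ t ∧ (∑ j, w i j * x t j) ∈ D) →
        x (t + 1) i = x t i)) :
    ∃ T, ∀ t, T ≤ t → x t = x T :=
  quaternionic_hopfield_convergence_general D S hSfin f hfS hproj N w hsym hdiag σ x hx0 hdyn
end

section
/- (Convergence of the bipolar Hopfield network.) Let N ≥ 1 and let (w_ij) be an N×N real matrix with w_ij = w_ji for all i, j and w_ii ≥ 0 for all i. Then for every update schedule σ : ℕ → {1,…,N} and every initial state x(0) ∈ {−1,+1}^N, the asynchronous trajectory defined by x_i(t+1) = sign(v_i(t)) if i = σ(t) and v_i(t) ≠ 0, and x_i(t+1) = x_i(t) otherwise, where v_i(t) = Σⱼ w_ij · x_j(t), is eventually constant: there exists T such that x(t) = x(T) for all t ≥ T. -/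
open Finset

private lemma hopfield_energy_step {N : ℕ} (w : Fin N → Fin N → ℝ)
    (hsym : ∀ i j, w i j = w j i) (hdiag : ∀ i, 0 ≤ w i i)
    (y z : Fin N → ℝ) (i₀ : Fin N)
    (hy : ∀ j, y j = -1 ∨ y j = 1)
    (hv : (∑ j, w i₀ j * y j) ≠ 0)
    (hz : z i₀ = Real.sign (∑ j, w i₀ j * y j))
    (hfix : ∀ j, j ≠ i₀ → z j = y j)
    (hch : z i₀ ≠ y i₀) :
    (∑ i, ∑ j, w i j * y i * y j) < ∑ i, ∑ j, w i j * z i * z j := by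
  classical
  set v := ∑ j, w i₀ j * y j with hvdef
  set s := Real.sign v with hsdef
  have hs : s = 1 ∨ s = -1 := by
    rcases hv.lt_or_gt with h | h
    · right; rw [hsdef]; exact Real.sign_of_neg h
    · left; rw [hsdef]; exact Real.sign_of_pos h
  have hsv : s * v = |v| := by
    rcases hv.lt_or_gt with h | h
    · rw [hsdef, Real.sign_of_neg h, abs_of_neg h]; ring
    · rw [hsdef, Real.sign_of_pos h, abs_of_pos h]; ring
  have hs2 : s * s = 1 := by rcases hs with h | h <;> rw [h] <;> norm_num
  have hne : s ≠ y i₀ := by rw [← hz]; exact hch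
  have hyi : y i₀ = -s := by
    rcases hy i₀ with h | h <;> rcases hs with h' | h' <;>
      simp [h, h'] at hne ⊢ <;> simp_all
  have hzj : ∀ j, z j = y j + (if j = i₀ then 2 * s else 0) := by
    intro j
    by_cases hj : j = i₀
    · subst hj; rw [hz, hyi, if_pos rfl]; ring
    · rw [hfix j hj, if_neg hj]; ring
  have hterm : ∀ i j, w i j * z i * z j =
      w i j * y i * y j
      + (if i = i₀ then w i j * (2 * s) * y j else 0)
      + (if j = i₀ then w i j * y i * (2 * s) else 0)
      + (if i = i₀ then (if j = i₀ then w i j * (2 * s) * (2 * s) else 0) else 0) := by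
    intro i j
    rw [hzj i, hzj j]
    by_cases hi : i = i₀ <;> by_cases hj : j = i₀ <;> simp [hi, hj] <;> ring
  have hB : ∑ i, ∑ j, (if i = i₀ then w i j * (2 * s) * y j else 0) = 2 * s * v := by
    simp only [Finset.sum_ite_irrel, Finset.sum_const_zero,
      Finset.sum_ite_eq' Finset.univ i₀, Finset.mem_univ, if_true]
    rw [hvdef, Finset.mul_sum]
    exact Finset.sum_congr rfl (fun j _ => by ring)
  have hC : ∑ i, ∑ j, (if j = i₀ then w i j * y i * (2 * s) else 0) = 2 * s * v := by
    have : ∀ i, ∑ j, (if j = i₀ then w i j * y i * (2 * s) else 0)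
        = w i i₀ * y i * (2 * s) := by
      intro i
      rw [Finset.sum_ite_eq' Finset.univ i₀ (fun j => w i j * y i * (2 * s))]
      simp
    simp_rw [this]
    rw [hvdef, Finset.mul_sum]
    refine Finset.sum_congr rfl (fun i _ => ?_)
    rw [hsym i i₀]; ring
  have hD : ∑ i, ∑ j, (if i = i₀ then (if j = i₀ then w i j * (2 * s) * (2 * s) else 0) else 0)
      = w i₀ i₀ * (2 * s) * (2 * s) := by
    simp only [Finset.sum_ite_irrel, Finset.sum_const_zero,
      Finset.sum_ite_eq' Finset.univ i₀, Finset.mem_univ, if_true]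
  have expand : (∑ i, ∑ j, w i j * z i * z j)
      = (∑ i, ∑ j, w i j * y i * y j) + 2 * s * v + 2 * s * v
        + w i₀ i₀ * (2 * s) * (2 * s) := by
    simp_rw [hterm, Finset.sum_add_distrib]
    rw [hB, hC, hD]
  have habs : 0 < |v| := abs_pos.mpr hv
  have hdd : w i₀ i₀ * (2 * s) * (2 * s) = 4 * w i₀ i₀ := by
    have : w i₀ i₀ * (2 * s) * (2 * s) = 4 * (s * s) * w i₀ i₀ := by ring
    rw [this, hs2]; ring
  rw [expand, hdd]
  have h1 : 2 * s * v = 2 * |v| := by rw [← hsv]; ring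
  rw [h1]
  have := hdiag i₀
  linarith

theorem bipolar_hopfield_convergence (N : ℕ) (hN : 1 ≤ N)
    (w : Fin N → Fin N → ℝ)
    (hsym : ∀ i j, w i j = w j i)
    (hdiag : ∀ i, 0 ≤ w i i)
    (σ : ℕ → Fin N) (x : ℕ → Fin N → ℝ)
    (hx0 : ∀ i, x 0 i = -1 ∨ x 0 i = 1)
    (hdyn : ∀ t i,
      ((i = σ t ∧ (∑ j, w i j * x t j) ≠ 0) →
        x (t + 1) i = Real.sign (∑ j, w i j * x t j)) ∧
      (¬(i = σ t ∧ (∑ j, w i j * x t j) ≠ 0) →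
        x (t + 1) i = x t i)) :
    ∃ T, ∀ t, T ≤ t → x t = x T := by
  classical
  have hbip : ∀ t i, x t i = -1 ∨ x t i = 1 := by
    intro t
    induction t with
    | zero => exact hx0
    | succ t ih =>
      intro i
      by_cases h : i = σ t ∧ (∑ j, w i j * x t j) ≠ 0
      · rw [(hdyn t i).1 h]
        rcases h.2.lt_or_gt with hv | hv
        · left; exact Real.sign_of_neg hv
        · right; exact Real.sign_of_pos hv
      · rw [(hdyn t i).2 h]; exact ih i
  set S : (Fin N → ℝ) → ℝ := fun y => ∑ i, ∑ j, w i j * y i * y j with hSdef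
  have hstep : ∀ t, x (t + 1) ≠ x t → S (x t) < S (x (t + 1)) := by
    intro t hne
    by_cases hv : (∑ j, w (σ t) j * x t j) = 0
    · exfalso
      apply hne
      funext i
      apply (hdyn t i).2
      rintro ⟨rfl, h⟩
      exact h hv
    · have hzi : x (t + 1) (σ t) = Real.sign (∑ j, w (σ t) j * x t j) :=
        (hdyn t (σ t)).1 ⟨rfl, hv⟩
      have hfix : ∀ j, j ≠ σ t → x (t + 1) j = x t j := fun j hj =>
        (hdyn t j).2 (by rintro ⟨rfl, _⟩; exact hj rfl)
      have hch : x (t + 1) (σ t) ≠ x t (σ t) := by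
        intro h
        apply hne
        funext j
        by_cases hj : j = σ t
        · subst hj; exact h
        · exact hfix j hj
      exact hopfield_energy_step w hsym hdiag (x t) (x (t + 1)) (σ t)
        (hbip t) hv hzi hfix hch
  have hmono : ∀ t u, t ≤ u → S (x t) ≤ S (x u) := by
    intro t u h
    induction u, h using Nat.le_induction with
    | base => exact le_refl _
    | succ u hu ih =>
      refine ih.trans ?_
      by_cases h : x (u + 1) = x u
      · rw [h]
      · exact (hstep u h).le
  set C : Set ℕ := {t | x (t + 1) ≠ x t} with hCdef
  have hinj : Set.InjOn x C := by
    intro t ht u hu hxe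
    by_contra hne
    rcases Ne.lt_or_gt hne with h | h
    · have h1 : S (x t) < S (x (t + 1)) := hstep t ht
      have h2 : S (x (t + 1)) ≤ S (x u) := hmono _ _ h
      rw [hxe] at h1; linarith
    · have h1 : S (x u) < S (x (u + 1)) := hstep u hu
      have h2 : S (x (u + 1)) ≤ S (x t) := hmono _ _ h
      rw [hxe] at h2; linarith
  have hCfin : C.Finite := by
    have hsub : x '' C ⊆ Set.pi Set.univ (fun _ : Fin N => ({-1, 1} : Set ℝ)) := by
      rintro _ ⟨t, _, rfl⟩ i _
      rcases hbip t i with h | h <;> simp [h]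
    have hfin : (x '' C).Finite :=
      Set.Finite.subset (Set.Finite.pi (fun _ =>
        Set.toFinite _)) hsub
    exact Set.Finite.of_finite_image hfin hinj
  obtain ⟨T, hT⟩ := hCfin.bddAbove
  refine ⟨T + 1, ?_⟩
  intro t ht
  induction t, ht using Nat.le_induction with
  | base => rfl
  | succ t ht ih =>
    have hnC : t ∉ C := fun h => by have := hT h; omega
    have hx : x (t + 1) = x t := not_not.mp hnC
    rw [hx, ih]
end

section
/- (Convergence of the symmetric complex-valued Hopfield network with the conjugated split-sign activation.) Let S = {1+i, 1−i, −1−i, −1+i}, let D = { z ∈ ℂ : Re z ≠ 0 and Im z ≠ 0 }, and for z ∈ D define f(z) = sign(Re z) − sign(Im z)·i. Let N ≥ 1 and let (w_ij) be an N×N complex matrix with w_ij = w_ji for all i, j (symmetric, not conjugate-symmetric), and with w_ii = 0 for all i. Then for every update schedule σ : ℕ → {1,…,N} and every initial state x(0) ∈ S^N, the asynchronous trajectory defined by x_i(t+1) = f(v_i(t)) if i = σ(t) and v_i(t) ∈ D, and x_i(t+1) = x_i(t) otherwise, where v_i(t) = Σⱼ w_ij · x_j(t), is eventually constant: there exists T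 such that x(t) = x(T) for all t ≥ T. -/
lemma hop_key_nonneg (r m ε η : ℝ) (hr : r ≠ 0) (hm : m ≠ 0)
    (hε : ε = 1 ∨ ε = -1) (hη : η = 1 ∨ η = -1) :
    0 ≤ (Real.sign r - ε) * r + (Real.sign m + η) * m := by
  have h1 : 0 ≤ (Real.sign r - ε) * r := by
    rcases hr.lt_or_gt with h | h
    · rw [Real.sign_of_neg h]; rcases hε with h' | h' <;> subst h' <;> nlinarith
    · rw [Real.sign_of_pos h]; rcases hε with h' | h' <;> subst h' <;> nlinarith
  have h2 : 0 ≤ (Real.sign m + η) * m := by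
    rcases hm.lt_or_gt with h | h
    · rw [Real.sign_of_neg h]; rcases hη with h' | h' <;> subst h' <;> nlinarith
    · rw [Real.sign_of_pos h]; rcases hη with h' | h' <;> subst h' <;> nlinarith
  linarith

lemma hop_key_pos (r m ε η : ℝ) (hr : r ≠ 0) (hm : m ≠ 0)
    (hε : ε = 1 ∨ ε = -1) (hη : η = 1 ∨ η = -1)
    (hne : ¬(Real.sign r = ε ∧ -Real.sign m = η)) :
    0 < (Real.sign r - ε) * r + (Real.sign m + η) * m := by
  have h1 : 0 ≤ (Real.sign r - ε) * r := by
    rcases hr.lt_or_gt with h | h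
    · rw [Real.sign_of_neg h]; rcases hε with h' | h' <;> subst h' <;> nlinarith
    · rw [Real.sign_of_pos h]; rcases hε with h' | h' <;> subst h' <;> nlinarith
  have h2 : 0 ≤ (Real.sign m + η) * m := by
    rcases hm.lt_or_gt with h | h
    · rw [Real.sign_of_neg h]; rcases hη with h' | h' <;> subst h' <;> nlinarith
    · rw [Real.sign_of_pos h]; rcases hη with h' | h' <;> subst h' <;> nlinarith
  by_cases hd : Real.sign r = ε
  · have hd2 : ¬ (-Real.sign m = η) := fun h => hne ⟨hd, h⟩
    have h2' : 0 < (Real.sign m + η) * m := by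
      rcases hm.lt_or_gt with h | h
      · rw [Real.sign_of_neg h] at hd2 ⊢
        rcases hη with h' | h' <;> subst h'
        · exact absurd (by norm_num) hd2
        · nlinarith
      · rw [Real.sign_of_pos h] at hd2 ⊢
        rcases hη with h' | h' <;> subst h'
        · nlinarith
        · exact absurd (by norm_num) hd2
    linarith
  · have h1' : 0 < (Real.sign r - ε) * r := by
      rcases hr.lt_or_gt with h | h
      · rw [Real.sign_of_neg h] at hd ⊢
        rcases hε with h' | h' <;> subst h'
        · nlinarith
        · exact absurd rfl hd
      · rw [Real.sign_of_pos h] at hd ⊢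
        rcases hε with h' | h' <;> subst h'
        · exact absurd rfl hd
        · nlinarith
    linarith
theorem symmetric_complex_conj_split_sign_hopfield_convergence
    (N : ℕ) (hN : 1 ≤ N)
    (w : Fin N → Fin N → ℂ)
    (hsym : ∀ i j, w i j = w j i)
    (hdiag : ∀ i, w i i = 0)
    (σ : ℕ → Fin N) (x : ℕ → Fin N → ℂ)
    (hx0 : ∀ i, x 0 i ∈
      ({1 + Complex.I, 1 - Complex.I, -1 - Complex.I, -1 + Complex.I} : Set ℂ))
    (hdyn : ∀ t i,
      ((i = σ t ∧ (∑ j, w i j * x t j).re ≠ 0 ∧ (∑ j, w i j * x t j).im ≠ 0) →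
        x (t + 1) i = (Real.sign (∑ j, w i j * x t j).re : ℂ) -
          (Real.sign (∑ j, w i j * x t j).im : ℂ) * Complex.I) ∧
      (¬(i = σ t ∧ (∑ j, w i j * x t j).re ≠ 0 ∧ (∑ j, w i j * x t j).im ≠ 0) →
        x (t + 1) i = x t i)) :
    ∃ T, ∀ t, T ≤ t → x t = x T := by
  classical
  have hinv : ∀ t i, ((x t i).re = 1 ∨ (x t i).re = -1) ∧
      ((x t i).im = 1 ∨ (x t i).im = -1) := by
    intro t
    induction t with
    | zero =>
      intro i
      have h := hx0 i
      simp only [Set.mem_insert_iff, Set.mem_singleton_iff] at h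
      rcases h with h | h | h | h <;> rw [h] <;> constructor <;> simp
    | succ t ih =>
      intro i
      by_cases hc : i = σ t ∧ (∑ j, w i j * x t j).re ≠ 0 ∧ (∑ j, w i j * x t j).im ≠ 0
      · rw [(hdyn t i).1 hc]
        constructor
        · rcases hc.2.1.lt_or_gt with h | h
          · right; rw [Real.sign_of_neg h]; simp
          · left; rw [Real.sign_of_pos h]; simp
        · rcases hc.2.2.lt_or_gt with h | h
          · left; rw [Real.sign_of_neg h]; simp
          · right; rw [Real.sign_of_pos h]; simp
      · rw [(hdyn t i).2 hc]; exact ih i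
  set E : (Fin N → ℂ) → ℝ := fun y => -(∑ i, ∑ j, w i j * y i * y j).re with hE
  have hstep : ∀ t, E (x (t+1)) ≤ E (x t) ∧ (x (t+1) ≠ x t → E (x (t+1)) < E (x t)) := by
    intro t
    have hkeep : ∀ j, j ≠ σ t → x (t+1) j = x t j := fun j hj => (hdyn t j).2 (fun h => hj h.1)
    by_cases hc : (∑ j, w (σ t) j * x t j).re ≠ 0 ∧ (∑ j, w (σ t) j * x t j).im ≠ 0
    · have hupd : x (t+1) (σ t) = (Real.sign (∑ j, w (σ t) j * x t j).re : ℂ) -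
          (Real.sign (∑ j, w (σ t) j * x t j).im : ℂ) * Complex.I :=
        (hdyn t (σ t)).1 ⟨rfl, hc.1, hc.2⟩
      set v := ∑ j, w (σ t) j * x t j with hv
      set δ := x (t+1) (σ t) - x t (σ t) with hδ
      set d : Fin N → ℂ := fun k => if k = σ t then δ else 0 with hd
      have hbd : ∀ k, x (t+1) k = x t k + d k := by
        intro k; by_cases hk : k = σ t
        · subst hk; simp [hd, hδ]
        · simp [hd, hk, hkeep k hk]
      have S2 : (∑ i, ∑ j, w i j * d i * x t j) = δ * v := by
        rw [Finset.sum_eq_single (σ t) (fun i _ hi => by simp [hd, hi])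
          (fun h => absurd (Finset.mem_univ _) h)]
        rw [hv, Finset.mul_sum]
        exact Finset.sum_congr rfl fun j _ => by simp [hd]; ring
      have S3 : (∑ i, ∑ j, w i j * x t i * d j) = δ * v := by
        have h3 : ∀ i, (∑ j, w i j * x t i * d j) = w (σ t) i * x t i * δ := by
          intro i
          rw [Finset.sum_eq_single (σ t) (fun j _ hj => by simp [hd, hj])
            (fun h => absurd (Finset.mem_univ _) h)]
          simp [hd, hsym i (σ t)]
        rw [Finset.sum_congr rfl fun i _ => h3 i, hv, Finset.mul_sum]
        exact Finset.sum_congr rfl fun i _ => by ring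
      have S4 : (∑ i, ∑ j, w i j * d i * d j) = 0 := by
        rw [Finset.sum_eq_single (σ t) (fun i _ hi => by simp [hd, hi])
          (fun h => absurd (Finset.mem_univ _) h)]
        rw [Finset.sum_eq_single (σ t) (fun j _ hj => by simp [hd, hj])
          (fun h => absurd (Finset.mem_univ _) h)]
        simp [hdiag]
      have hsum : (∑ i, ∑ j, w i j * x (t+1) i * x (t+1) j)
          = (∑ i, ∑ j, w i j * x t i * x t j) + (δ * v + δ * v) := by
        have expand : ∀ i j : Fin N, w i j * x (t+1) i * x (t+1) j =
            w i j * x t i * x t j + w i j * d i * x t j + w i j * x t i * d j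
              + w i j * d i * d j := by
          intro i j; rw [hbd i, hbd j]; ring
        calc (∑ i, ∑ j, w i j * x (t+1) i * x (t+1) j)
            = ∑ i, ∑ j, (w i j * x t i * x t j + w i j * d i * x t j
                + w i j * x t i * d j + w i j * d i * d j) :=
              Finset.sum_congr rfl fun i _ => Finset.sum_congr rfl fun j _ => expand i j
          _ = (∑ i, ∑ j, w i j * x t i * x t j) + (∑ i, ∑ j, w i j * d i * x t j)
              + (∑ i, ∑ j, w i j * x t i * d j) + (∑ i, ∑ j, w i j * d i * d j) := by
              simp [Finset.sum_add_distrib]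
          _ = (∑ i, ∑ j, w i j * x t i * x t j) + (δ * v + δ * v) := by
              rw [S2, S3, S4]; ring
      have hδre : δ.re = Real.sign v.re - (x t (σ t)).re := by
        rw [hδ, hupd]; simp
      have hδim : δ.im = -Real.sign v.im - (x t (σ t)).im := by
        rw [hδ, hupd]; simp
      have hre : (δ * v).re = (Real.sign v.re - (x t (σ t)).re) * v.re
          + (Real.sign v.im + (x t (σ t)).im) * v.im := by
        rw [Complex.mul_re, hδre, hδim]; ring
      have h0 : 0 ≤ (δ * v).re := by
        rw [hre]
        exact hop_key_nonneg v.re v.im _ _ hc.1 hc.2 (hinv t (σ t)).1 (hinv t (σ t)).2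
      have hEdiff : E (x (t+1)) = E (x t) - 2 * (δ * v).re := by
        simp only [hE]
        rw [hsum, Complex.add_re, Complex.add_re]
        ring
      constructor
      · rw [hEdiff]; linarith
      · intro hne
        have hne' : x (t+1) (σ t) ≠ x t (σ t) := by
          intro h
          exact hne (funext fun j => by
            by_cases hj : j = σ t
            · rw [hj]; exact h
            · exact hkeep j hj)
        have hnc : ¬(Real.sign v.re = (x t (σ t)).re ∧
            -Real.sign v.im = (x t (σ t)).im) := by
          rintro ⟨h1, h2⟩
          apply hne'
          have hz : δ = 0 := Complex.ext (by rw [hδre, h1]; simp) (by rw [hδim, h2]; simp)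
          rw [hδ] at hz
          exact sub_eq_zero.mp hz
        have hpos : 0 < (δ * v).re := by
          rw [hre]
          exact hop_key_pos v.re v.im _ _ hc.1 hc.2 (hinv t (σ t)).1 (hinv t (σ t)).2 hnc
        rw [hEdiff]; linarith
    · have hxx : x (t+1) = x t := funext fun j => by
        by_cases hj : j = σ t
        · subst hj; exact (hdyn t (σ t)).2 (fun h => hc h.2)
        · exact hkeep j hj
      exact ⟨le_of_eq (by rw [hxx]), fun h => absurd hxx h⟩
  have hmono : ∀ s u, s ≤ u → E (x u) ≤ E (x s) := by
    intro s u hsu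
    induction u with
    | zero =>
      have : s = 0 := Nat.le_zero.mp hsu
      subst this; exact le_refl _
    | succ u ih =>
      rcases Nat.lt_or_ge s (u+1) with h | h
      · exact le_trans (hstep u).1 (ih (Nat.lt_succ_iff.mp h))
      · have : s = u + 1 := le_antisymm hsu h
        subst this; exact le_refl _
  have hfin : (Set.range fun t => E (x t)).Finite := by
    have hS : ({z : ℂ | (z.re = 1 ∨ z.re = -1) ∧ (z.im = 1 ∨ z.im = -1)}).Finite := by
      apply Set.Finite.subset
        (s := ({1 + Complex.I, 1 - Complex.I, -1 - Complex.I, -1 + Complex.I} : Set ℂ))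
      · exact (((Set.finite_singleton _).insert _).insert _).insert _
      · rintro z ⟨h1 | h1, h2 | h2⟩ <;>
          simp [Set.mem_insert_iff, Set.mem_singleton_iff, Complex.ext_iff, h1, h2]
    have hT : (Set.range fun t => E (x t)) ⊆ (fun y => E y) ''
        (Set.univ.pi fun _ : Fin N =>
          {z : ℂ | (z.re = 1 ∨ z.re = -1) ∧ (z.im = 1 ∨ z.im = -1)}) := by
      rintro e ⟨t, rfl⟩
      exact ⟨x t, fun i _ => hinv t i, rfl⟩
    exact Set.Finite.subset (Set.Finite.image _ (Set.Finite.pi fun _ => hS)) hT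
  obtain ⟨e, he, hmin⟩ := hfin.toFinset.exists_min_image id
    ⟨E (x 0), by rw [Set.Finite.mem_toFinset]; exact ⟨0, rfl⟩⟩
  rw [Set.Finite.mem_toFinset] at he
  obtain ⟨T, rfl⟩ := he
  have hminAll : ∀ t, E (x T) ≤ E (x t) := fun t =>
    hmin _ (by rw [Set.Finite.mem_toFinset]; exact ⟨t, rfl⟩)
  refine ⟨T, ?_⟩
  intro t ht
  induction t, ht using Nat.le_induction with
  | base => rfl
  | succ t ht ih =>
    by_cases h : x (t+1) = x t
    · rw [h, ih]
    · exfalso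
      have h1 := (hstep t).2 h
      have h2 := hminAll (t+1)
      rw [ih] at h1
      linarith
end

section
/- (Convergence of the hyperbolic-valued split-sign Hopfield network.) Identify hyperbolic numbers with pairs (a,b) ∈ ℝ² endowed with the product (a,b)·(c,d) = (ac+bd, ad+bc). Let S = {(ε,δ) : ε,δ ∈ {−1,+1}} and D = {(a,b) : a ≠ 0 and b ≠ 0}, and for (a,b) ∈ D define sgn(a,b) = (sign a, sign b). Let N ≥ 1 and let (w_ij) be an N×N matrix of hyperbolic numbers w_ij = (a_ij, b_ij) with a_ij = a_ji and b_ij = b_ji for all i, j, and with each diagonal entry w_ii = (a_ii, 0) where a_ii ≥ 0. Then for every update schedule σ : ℕ → {1,…,N} and every initial state x(0) ∈ S^N, the asynchronous trajectory defined by x_i(t+1) = sgn(v_i(t)) if i = σ(t) and v_i(t) ∈ D, and x_i(t+1) = x_i(t) otherwise, where v_i(t) = Σⱼ w_ij · x_j(t) (sum and product of hyperbolic numbers), is eventually constant: there exists T such that x(t) = x(T) for all t ≥ T. -/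
/-- Multiplication of hyperbolic numbers represented as pairs `(a, b) ∈ ℝ²`,
i.e. `a + b𝐢` with `𝐢² = +1`. -/
def hypMul (p q : ℝ × ℝ) : ℝ × ℝ :=
  (p.1 * q.1 + p.2 * q.2, p.1 * q.2 + p.2 * q.1)

/-- Euclidean inner product on `ℝ²`. -/
def inr2 (p q : ℝ × ℝ) : ℝ := p.1 * q.1 + p.2 * q.2

lemma inr2_sum {ι : Type*} (s : Finset ι) (p : ι → ℝ × ℝ) (q : ℝ × ℝ) :
    inr2 (∑ j ∈ s, p j) q = ∑ j ∈ s, inr2 (p j) q := by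
  simp only [inr2, Prod.fst_sum, Prod.snd_sum, Finset.sum_mul]
  rw [← Finset.sum_add_distrib]

lemma energy_step {N : ℕ} (w : Fin N → Fin N → ℝ × ℝ)
    (hsym : ∀ i j, w i j = w j i)
    (x x' : Fin N → ℝ × ℝ) (i₀ : Fin N)
    (hoff : ∀ j, j ≠ i₀ → x' j = x j) :
    ∑ i, ∑ j, inr2 (hypMul (w i j) (x' j)) (x' i)
      = (∑ i, ∑ j, inr2 (hypMul (w i j) (x j)) (x i))
        + 2 * inr2 (∑ j, hypMul (w i₀ j) (x j)) (x' i₀ - x i₀)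
        + inr2 (hypMul (w i₀ i₀) (x' i₀ - x i₀)) (x' i₀ - x i₀) := by
  set δ : Fin N → ℝ × ℝ := fun j => x' j - x j with hδ
  have hx' : ∀ j, x' j = x j + δ j := by intro j; simp [hδ]
  have hδ0 : ∀ j, j ≠ i₀ → δ j = 0 := by intro j hj; simp [hδ, hoff j hj]
  have point : ∀ i j, inr2 (hypMul (w i j) (x' j)) (x' i)
      = inr2 (hypMul (w i j) (x j)) (x i)
        + inr2 (hypMul (w i j) (δ j)) (x i)
        + inr2 (hypMul (w i j) (x j)) (δ i)
        + inr2 (hypMul (w i j) (δ j)) (δ i) := by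
    intro i j
    rw [hx' i, hx' j]
    simp only [inr2, hypMul, Prod.fst_add, Prod.snd_add]
    ring
  have expand : ∑ i, ∑ j, inr2 (hypMul (w i j) (x' j)) (x' i)
      = (∑ i, ∑ j, inr2 (hypMul (w i j) (x j)) (x i))
        + (∑ i, ∑ j, inr2 (hypMul (w i j) (δ j)) (x i))
        + (∑ i, ∑ j, inr2 (hypMul (w i j) (x j)) (δ i))
        + (∑ i, ∑ j, inr2 (hypMul (w i j) (δ j)) (δ i)) := by
    simp only [point, Finset.sum_add_distrib]
  have hT1 : ∑ i, ∑ j, inr2 (hypMul (w i j) (δ j)) (x i)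
      = inr2 (∑ j, hypMul (w i₀ j) (x j)) (δ i₀) := by
    have h1 : ∀ i : Fin N, ∑ j, inr2 (hypMul (w i j) (δ j)) (x i)
        = inr2 (hypMul (w i i₀) (δ i₀)) (x i) := by
      intro i
      refine Finset.sum_eq_single i₀ (fun j _ hj => by rw [hδ0 j hj]; simp [inr2, hypMul])
        (by simp)
    simp only [h1]
    rw [inr2_sum]
    refine Finset.sum_congr rfl (fun i _ => ?_)
    rw [hsym i i₀]
    simp only [inr2, hypMul]
    ring
  have hT2 : ∑ i, ∑ j, inr2 (hypMul (w i j) (x j)) (δ i)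
      = inr2 (∑ j, hypMul (w i₀ j) (x j)) (δ i₀) := by
    rw [inr2_sum]
    refine Finset.sum_eq_single i₀ (fun i _ hi => ?_) (by simp)
    refine Finset.sum_eq_zero (fun j _ => ?_)
    rw [hδ0 i hi]
    simp [inr2]
  have hT3 : ∑ i, ∑ j, inr2 (hypMul (w i j) (δ j)) (δ i)
      = inr2 (hypMul (w i₀ i₀) (δ i₀)) (δ i₀) := by
    have h1 : ∑ i, ∑ j, inr2 (hypMul (w i j) (δ j)) (δ i)
        = ∑ j, inr2 (hypMul (w i₀ j) (δ j)) (δ i₀) := by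
      refine Finset.sum_eq_single i₀ (fun i _ hi => ?_) (by simp)
      refine Finset.sum_eq_zero (fun j _ => ?_)
      rw [hδ0 i hi]
      simp [inr2]
    rw [h1]
    exact Finset.sum_eq_single i₀
      (fun j _ hj => by rw [hδ0 j hj]; simp [inr2, hypMul]) (by simp)
  have hΔ : δ i₀ = x' i₀ - x i₀ := rfl
  rw [expand, hT1, hT2, hT3, hΔ]
  ring

lemma sign_term (v d : ℝ) (hv : v ≠ 0) (hd : d = -1 ∨ d = 1) :
    0 ≤ v * (Real.sign v - d) ∧ (Real.sign v ≠ d → 0 < v * (Real.sign v - d)) := by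
  rcases hv.lt_or_gt with h | h
  · rw [Real.sign_of_neg h]
    rcases hd with rfl | rfl
    · simp
    · constructor
      · nlinarith
      · intro _; nlinarith
  · rw [Real.sign_of_pos h]
    rcases hd with rfl | rfl
    · constructor
      · nlinarith
      · intro _; nlinarith
    · simp

lemma sign_ne_zero_cases (v : ℝ) (hv : v ≠ 0) : Real.sign v = -1 ∨ Real.sign v = 1 := by
  rcases hv.lt_or_gt with h | h
  · left; exact Real.sign_of_neg h
  · right; exact Real.sign_of_pos h

theorem hyperbolic_split_sign_hopfield_convergence
    (N : ℕ) (hN : 1 ≤ N)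
    (w : Fin N → Fin N → ℝ × ℝ)
    (hsym : ∀ i j, w i j = w j i)
    (hdiag : ∀ i, ∃ a : ℝ, 0 ≤ a ∧ w i i = (a, 0))
    (σ : ℕ → Fin N) (x : ℕ → Fin N → ℝ × ℝ)
    (hx0 : ∀ i, ((x 0 i).1 = -1 ∨ (x 0 i).1 = 1) ∧
      ((x 0 i).2 = -1 ∨ (x 0 i).2 = 1))
    (hdyn : ∀ t i,
      ((i = σ t ∧ (∑ j, hypMul (w i j) (x t j)).1 ≠ 0 ∧
          (∑ j, hypMul (w i j) (x t j)).2 ≠ 0) →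
        x (t + 1) i = (Real.sign (∑ j, hypMul (w i j) (x t j)).1,
          Real.sign (∑ j, hypMul (w i j) (x t j)).2)) ∧
      (¬(i = σ t ∧ (∑ j, hypMul (w i j) (x t j)).1 ≠ 0 ∧
          (∑ j, hypMul (w i j) (x t j)).2 ≠ 0) →
        x (t + 1) i = x t i)) :
    ∃ T, ∀ t, T ≤ t → x t = x T := by
  set F : (Fin N → ℝ × ℝ) → ℝ :=
    fun y => ∑ i, ∑ j, inr2 (hypMul (w i j) (y j)) (y i) with hF
  -- states stay in {±1}²
  have hS : ∀ t i, ((x t i).1 = -1 ∨ (x t i).1 = 1) ∧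
      ((x t i).2 = -1 ∨ (x t i).2 = 1) := by
    intro t
    induction t with
    | zero => exact hx0
    | succ t ih =>
      intro i
      by_cases hc : i = σ t ∧ (∑ j, hypMul (w i j) (x t j)).1 ≠ 0 ∧
          (∑ j, hypMul (w i j) (x t j)).2 ≠ 0
      · rw [(hdyn t i).1 hc]
        exact ⟨sign_ne_zero_cases _ hc.2.1, sign_ne_zero_cases _ hc.2.2⟩
      · rw [(hdyn t i).2 hc]; exact ih i
  -- key dichotomy
  have key : ∀ t, x (t + 1) = x t ∨ F (x t) < F (x (t + 1)) := by
    intro t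
    have hoff : ∀ j, j ≠ σ t → x (t + 1) j = x t j := by
      intro j hj
      exact (hdyn t j).2 (fun h => hj h.1)
    by_cases hch : x (t + 1) (σ t) = x t (σ t)
    · left
      funext j
      by_cases hj : j = σ t
      · rw [hj]; exact hch
      · exact hoff j hj
    · right
      have hc : (σ t = σ t ∧ (∑ j, hypMul (w (σ t) j) (x t j)).1 ≠ 0 ∧
          (∑ j, hypMul (w (σ t) j) (x t j)).2 ≠ 0) := by
        by_contra hcc
        exact hch ((hdyn t (σ t)).2 hcc)
      obtain ⟨-, h1, h2⟩ := hc
      have hupd := (hdyn t (σ t)).1 ⟨rfl, h1, h2⟩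
      set v := ∑ j, hypMul (w (σ t) j) (x t j) with hv
      set Δ : ℝ × ℝ := x (t + 1) (σ t) - x t (σ t) with hΔdef
      have hstep := energy_step w hsym (x t) (x (t + 1)) (σ t) hoff
      -- positivity of inner-product term
      have hpos : 0 < inr2 v Δ := by
        have hs1 := sign_term v.1 (x t (σ t)).1 h1 (hS t (σ t)).1
        have hs2 := sign_term v.2 (x t (σ t)).2 h2 (hS t (σ t)).2
        have hΔ1 : Δ.1 = Real.sign v.1 - (x t (σ t)).1 := by
          simp [hΔdef, hupd]
        have hΔ2 : Δ.2 = Real.sign v.2 - (x t (σ t)).2 := by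
          simp [hΔdef, hupd]
        have hne : Real.sign v.1 ≠ (x t (σ t)).1 ∨ Real.sign v.2 ≠ (x t (σ t)).2 := by
          by_contra hcon
          push_neg at hcon
          apply hch
          rw [hupd, Prod.ext_iff]
          exact ⟨hcon.1, hcon.2⟩
        have : inr2 v Δ = v.1 * (Real.sign v.1 - (x t (σ t)).1)
            + v.2 * (Real.sign v.2 - (x t (σ t)).2) := by
          rw [inr2, hΔ1, hΔ2]
        rw [this]
        rcases hne with h | h
        · have := hs1.2 h
          linarith [hs2.1]
        · have := hs2.2 h
          linarith [hs1.1]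
      -- nonnegativity of diagonal term
      have hdnn : 0 ≤ inr2 (hypMul (w (σ t) (σ t)) Δ) Δ := by
        obtain ⟨a, ha, hwa⟩ := hdiag (σ t)
        rw [hwa]
        simp only [inr2, hypMul]
        nlinarith [sq_nonneg Δ.1, sq_nonneg Δ.2]
      simp only [hF]
      rw [hstep]
      have : 0 < 2 * inr2 v Δ := by linarith
      linarith
  -- monotonicity
  have mono : ∀ s t : ℕ, s ≤ t → F (x s) ≤ F (x t) := by
    intro s t hst
    induction t, hst using Nat.le_induction with
    | base => exact le_rfl
    | succ t hst ih =>
      rcases key t with h | h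
      · rw [h]; exact ih
      · exact le_of_lt (lt_of_le_of_lt ih h)
  -- the energy takes finitely many values
  have hfin : (Set.range fun t => F (x t)).Finite := by
    have hsub : (Set.range fun t => F (x t)) ⊆
        F '' (Set.univ.pi fun _ : Fin N => ({-1, 1} : Set ℝ) ×ˢ ({-1, 1} : Set ℝ)) := by
      rintro - ⟨t, rfl⟩
      refine ⟨x t, fun i _ => ?_, rfl⟩
      rw [Set.mem_prod]
      exact ⟨(hS t i).1, (hS t i).2⟩
    refine Set.Finite.subset (Set.Finite.image F (Set.Finite.pi fun i => ?_)) hsub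
    exact Set.Finite.prod ((Set.finite_singleton _).insert _)
      ((Set.finite_singleton _).insert _)
  -- obtain a maximum
  obtain ⟨T, hT⟩ : ∃ T, ∀ t, F (x t) ≤ F (x T) := by
    have hne : hfin.toFinset.Nonempty := ⟨F (x 0), by simp⟩
    have hmem := hfin.toFinset.max'_mem hne
    rw [Set.Finite.mem_toFinset] at hmem
    obtain ⟨T, hT⟩ := hmem
    have hT' : F (x T) = hfin.toFinset.max' hne := hT
    refine ⟨T, fun t => ?_⟩
    rw [hT']
    exact Finset.le_max' _ _ (by rw [Set.Finite.mem_toFinset]; exact ⟨t, rfl⟩)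
  refine ⟨T, fun t ht => ?_⟩
  induction t, ht using Nat.le_induction with
  | base => rfl
  | succ t ht ih =>
    rcases key t with h | h
    · rw [h]; exact ih
    · exfalso
      have h1 : F (x T) ≤ F (x t) := mono T t ht
      have h2 : F (x (t + 1)) ≤ F (x T) := hT (t + 1)
      linarith
end

section
/- (Convergence of the quaternion-valued split-sign Hopfield network.) Let S = { p ∈ ℍ : each of the four real components of p lies in {−1,+1} } and D = { q ∈ ℍ : all four real components of q are nonzero }, and for q ∈ D let sgn(q) ∈ S be the quaternion whose components are the signs of the corresponding components of q. Let N ≥ 1 and let (w_ij) be an N×N quaternion matrix with w_ij = star(w_ji) for all i, j, and with each diagonal entry w_ii a nonnegative real number. Then for every update schedule σ : ℕ → {1,…,N} and every initial state x(0) ∈ S^N, the asynchronous trajectory defined by x_i(t+1) = sgn(v_i(t)) if i = σ(t) and v_i(t) ∈ D, and x_i(t+1) = x_i(t) otherwise, where v_i(t) = Σⱼ w_ij * x_j(t), is eventually constant: there exists T such that x(t) = x(T) for all t ≥ T. -/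
/-!
The energy `E(x) = Re ∑ⱼ ∑ₖ x̄ⱼ wⱼₖ xₖ` is a Lyapunov function. Updating neuron `i` from `a` to
`b = sgn v`, where `v` is its activation potential, changes `E` by
`2 Re((b - a)̄ v) + Re((b - a)̄ wᵢᵢ (b - a))`. The first term is the sum over the four components of
`(sgn v_c - a_c) v_c`, each nonnegative and one of them positive as soon as `b ≠ a`; the second is
`wᵢᵢ |b - a|² ≥ 0`. So every step either leaves the state unchanged or strictly raises the energy,
and since the states stay in the finite set `S^N` the trajectory must become stationary.
-/

open Function Finset Quaternion

theorem update_eq_add_single {ι R : Type*} [DecidableEq ι] [AddCommGroup R] (x : ι → R) (i : ι)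
    (b : R) : update x i b = x + Pi.single i (b - x i) := by
  ext k
  rcases eq_or_ne k i with rfl | hk <;> simp [*]

theorem sum_star_mul_mul_add_single {ι R : Type*} [Fintype ι] [DecidableEq ι] [Ring R]
    [StarRing R] (w : ι → ι → R) (i : ι) (hw : ∀ j, w j i = star (w i j)) (x : ι → R) (d : R) :
    ∑ j, ∑ k, star ((x + Pi.single i d : ι → R) j) * w j k * (x + Pi.single i d : ι → R) k =
      ∑ j, ∑ k, star (x j) * w j k * x k + star d * ∑ j, w i j * x j
        + star (∑ j, w i j * x j) * d + star d * w i i * d := by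
  have h_left : ∑ j, ∑ k, star ((Pi.single i d : ι → R) j) * w j k * x k =
      star d * ∑ k, w i k * x k := by
    rw [Fintype.sum_eq_single i fun j hj => by simp [hj]]
    simp [mul_sum, mul_assoc]
  have h_right : ∑ j, ∑ k, star (x j) * w j k * (Pi.single i d : ι → R) k =
      star (∑ j, w i j * x j) * d := by
    simp [Pi.single_apply, sum_mul, hw]
  have h_diag : ∑ j, ∑ k, star ((Pi.single i d : ι → R) j) * w j k * (Pi.single i d : ι → R) k =
      star d * w i i * d := by
    rw [Fintype.sum_eq_single i fun j hj => by simp [hj]]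
    simp [Pi.single_apply]
  simp only [Pi.add_apply, star_add, add_mul, mul_add, sum_add_distrib, h_left, h_right, h_diag]
  abel

theorem exists_forall_ge_eq_of_finite_range {α β : Type*} [Preorder β] {x : ℕ → α}
    (hfin : (Set.range x).Finite) (f : α → β)
    (hstep : ∀ t, x (t + 1) = x t ∨ f (x t) < f (x (t + 1))) :
    ∃ T, ∀ t, T ≤ t → x t = x T := by
  have hmono : Monotone (f ∘ x) := monotone_nat_of_le_succ fun t =>
    (hstep t).elim (fun h => (congrArg f h).ge) le_of_lt
  obtain ⟨_, ⟨T, rfl⟩, hmax⟩ := hfin.exists_maximalFor f _ (Set.range_nonempty x)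
  have hstable : ∀ t, T ≤ t → x (t + 1) = x t := fun t ht =>
    (hstep t).resolve_right fun hlt =>
      hlt.not_ge <| (hmax ⟨t + 1, rfl⟩ (hmono (ht.trans t.le_succ))).trans (hmono ht)
  refine ⟨T, fun t ht => ?_⟩
  induction t, ht using Nat.le_induction with
  | base => rfl
  | succ t ht ih => rw [hstable t ht, ih]

theorem Real.sign_sub_mul_pos {a v : ℝ} (ha : a = -1 ∨ a = 1) (hv : v ≠ 0)
    (hne : Real.sign v ≠ a) : 0 < (Real.sign v - a) * v := by
  have ha' : a = -Real.sign v := by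
    rcases ha with rfl | rfl <;> rcases Real.sign_apply_eq_of_ne_zero v hv with h | h <;>
      simp_all
  rw [ha', sub_neg_eq_add, ← two_mul, mul_assoc]
  exact mul_pos two_pos (Real.sign_mul_pos_of_ne_zero v hv)

theorem Real.sign_sub_mul_nonneg {a v : ℝ} (ha : a = -1 ∨ a = 1) (hv : v ≠ 0) :
    0 ≤ (Real.sign v - a) * v := by
  by_cases h : Real.sign v = a
  · simp [h]
  · exact (Real.sign_sub_mul_pos ha hv h).le

theorem Quaternion.re_star_mul (p q : ℍ[ℝ]) :
    (star p * q).re = p.re * q.re + p.imI * q.imI + p.imJ * q.imJ + p.imK * q.imK := by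
  simp [re_mul]

theorem Quaternion.re_star_mul_coe_mul (d : ℍ[ℝ]) (r : ℝ) :
    (star d * (r : ℍ[ℝ]) * d).re = r * normSq d := by
  rw [← Quaternion.coe_commutes, mul_assoc, Quaternion.star_mul_self, ← Quaternion.coe_mul,
    Quaternion.re_coe]

noncomputable section

namespace QuaternionHopfield

def splitSigns : Set ℍ[ℝ] :=
  {q | (q.re = -1 ∨ q.re = 1) ∧ (q.imI = -1 ∨ q.imI = 1) ∧ (q.imJ = -1 ∨ q.imJ = 1) ∧
    (q.imK = -1 ∨ q.imK = 1)}

def splitSignDomain : Set ℍ[ℝ] := {q | q.re ≠ 0 ∧ q.imI ≠ 0 ∧ q.imJ ≠ 0 ∧ q.imK ≠ 0}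

def splitSign (q : ℍ[ℝ]) : ℍ[ℝ] :=
  ⟨Real.sign q.re, Real.sign q.imI, Real.sign q.imJ, Real.sign q.imK⟩

theorem splitSigns_finite : splitSigns.Finite := by
  have hpm : ({-1, 1} : Set ℝ).Finite := Set.toFinite _
  refine ((hpm.prod (hpm.prod (hpm.prod hpm))).preimage
    (QuaternionAlgebra.equivProd (-1 : ℝ) 0 (-1)).injective.injOn).subset ?_
  rintro q ⟨h₁, h₂, h₃, h₄⟩
  exact ⟨h₁, h₂, h₃, h₄⟩

theorem splitSign_mem_splitSigns {q : ℍ[ℝ]} (hq : q ∈ splitSignDomain) :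
    splitSign q ∈ splitSigns :=
  ⟨Real.sign_apply_eq_of_ne_zero _ hq.1, Real.sign_apply_eq_of_ne_zero _ hq.2.1,
    Real.sign_apply_eq_of_ne_zero _ hq.2.2.1, Real.sign_apply_eq_of_ne_zero _ hq.2.2.2⟩

theorem re_star_splitSign_sub_mul_pos {a v : ℍ[ℝ]} (ha : a ∈ splitSigns)
    (hv : v ∈ splitSignDomain) (hne : splitSign v ≠ a) :
    0 < (star (splitSign v - a) * v).re := by
  obtain ⟨ha₁, ha₂, ha₃, ha₄⟩ := ha
  obtain ⟨hv₁, hv₂, hv₃, hv₄⟩ := hv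
  have h₁ := Real.sign_sub_mul_nonneg ha₁ hv₁
  have h₂ := Real.sign_sub_mul_nonneg ha₂ hv₂
  have h₃ := Real.sign_sub_mul_nonneg ha₃ hv₃
  have h₄ := Real.sign_sub_mul_nonneg ha₄ hv₄
  have hcomp : Real.sign v.re ≠ a.re ∨ Real.sign v.imI ≠ a.imI ∨
      Real.sign v.imJ ≠ a.imJ ∨ Real.sign v.imK ≠ a.imK := by
    by_contra! h
    exact hne (QuaternionAlgebra.ext h.1 h.2.1 h.2.2.1 h.2.2.2)
  have hdot : (star (splitSign v - a) * v).re = (Real.sign v.re - a.re) * v.re +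
      (Real.sign v.imI - a.imI) * v.imI + (Real.sign v.imJ - a.imJ) * v.imJ +
      (Real.sign v.imK - a.imK) * v.imK := by
    rw [Quaternion.re_star_mul]
    rfl
  rw [hdot]
  rcases hcomp with h | h | h | h
  · linarith [Real.sign_sub_mul_pos ha₁ hv₁ h]
  · linarith [Real.sign_sub_mul_pos ha₂ hv₂ h]
  · linarith [Real.sign_sub_mul_pos ha₃ hv₃ h]
  · linarith [Real.sign_sub_mul_pos ha₄ hv₄ h]

variable {ι : Type*} [Fintype ι] [DecidableEq ι]

def activation (w : ι → ι → ℍ[ℝ]) (y : ι → ℍ[ℝ]) (i : ι) : ℍ[ℝ] := ∑ j, w i j * y j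

def energy (w : ι → ι → ℍ[ℝ]) (y : ι → ℍ[ℝ]) : ℝ := (∑ j, ∑ k, star (y j) * w j k * y k).re

theorem energy_update {w : ι → ι → ℍ[ℝ]} (hsym : ∀ i j, w i j = star (w j i))
    (y : ι → ℍ[ℝ]) (i : ι) (b : ℍ[ℝ]) :
    energy w (update y i b) = energy w y + 2 * (star (b - y i) * activation w y i).re
      + (star (b - y i) * w i i * (b - y i)).re := by
  have hre : (star (activation w y i) * (b - y i)).re =
      (star (b - y i) * activation w y i).re := by
    rw [← Quaternion.re_star, star_mul, star_star]
  simp only [energy, activation, update_eq_add_single y i b,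
    sum_star_mul_mul_add_single w i (fun j => hsym j i), Quaternion.re_add] at hre ⊢
  rw [hre]
  ring

theorem energy_lt_energy_update {w : ι → ι → ℍ[ℝ]} (hsym : ∀ i j, w i j = star (w j i))
    {i : ι} (hdiag : ∃ r : ℝ, 0 ≤ r ∧ w i i = (r : ℍ[ℝ])) {y : ι → ℍ[ℝ]} (hy : y i ∈ splitSigns)
    (hv : activation w y i ∈ splitSignDomain) (hne : splitSign (activation w y i) ≠ y i) :
    energy w y < energy w (update y i (splitSign (activation w y i))) := by
  obtain ⟨r, hr, hwii⟩ := hdiag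
  have hgain := re_star_splitSign_sub_mul_pos hy hv hne
  have hdiag_nonneg : 0 ≤ (star (splitSign (activation w y i) - y i) * w i i *
      (splitSign (activation w y i) - y i)).re := by
    rw [hwii, Quaternion.re_star_mul_coe_mul]
    exact mul_nonneg hr normSq_nonneg
  rw [energy_update hsym]
  linarith

def IsAsyncStep (w : ι → ι → ℍ[ℝ]) (k : ι) (y y' : ι → ℍ[ℝ]) : Prop :=
  ∀ i, ((i = k ∧ activation w y i ∈ splitSignDomain) → y' i = splitSign (activation w y i)) ∧
    (¬(i = k ∧ activation w y i ∈ splitSignDomain) → y' i = y i)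

namespace IsAsyncStep

variable {w : ι → ι → ℍ[ℝ]} {k : ι} {y y' : ι → ℍ[ℝ]}

theorem eq_or_eq_update (h : IsAsyncStep w k y y') :
    y' = y ∨ (activation w y k ∈ splitSignDomain ∧
      y' = update y k (splitSign (activation w y k))) := by
  by_cases hk : activation w y k ∈ splitSignDomain
  · refine .inr ⟨hk, funext fun i => ?_⟩
    rcases eq_or_ne i k with rfl | hi
    · simpa using (h i).1 ⟨rfl, hk⟩
    · simpa [hi] using (h i).2 (fun hc => hi hc.1)
  · exact .inl (funext fun i => (h i).2 fun hc => hk (hc.1 ▸ hc.2))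

theorem mem_pi_splitSigns (h : IsAsyncStep w k y y')
    (hy : y ∈ Set.univ.pi fun _ => splitSigns) : y' ∈ Set.univ.pi fun _ => splitSigns := by
  rcases h.eq_or_eq_update with rfl | ⟨hk, rfl⟩
  · exact hy
  · exact (Set.update_mem_pi_iff_of_mem hy).2 fun _ => splitSign_mem_splitSigns hk

theorem eq_or_energy_lt (h : IsAsyncStep w k y y') (hsym : ∀ i j, w i j = star (w j i))
    (hdiag : ∃ r : ℝ, 0 ≤ r ∧ w k k = (r : ℍ[ℝ])) (hy : y k ∈ splitSigns) :
    y' = y ∨ energy w y < energy w y' := by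
  rcases h.eq_or_eq_update with rfl | ⟨hk, rfl⟩
  · exact .inl rfl
  by_cases hne : splitSign (activation w y k) = y k
  · exact .inl (by rw [hne, update_eq_self])
  · exact .inr (energy_lt_energy_update hsym hdiag hy hk hne)

end IsAsyncStep

end QuaternionHopfield

end

open QuaternionHopfield in
theorem quaternion_split_sign_hopfield_convergence_general
    (N : ℕ)
    (w : Fin N → Fin N → Quaternion ℝ)
    (hsym : ∀ i j, w i j = star (w j i))
    (hdiag : ∀ i, ∃ r : ℝ, 0 ≤ r ∧ w i i = (r : Quaternion ℝ))
    (σ : ℕ → Fin N) (x : ℕ → Fin N → Quaternion ℝ)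
    (hx0 : ∀ i, ((x 0 i).re = -1 ∨ (x 0 i).re = 1) ∧
      ((x 0 i).imI = -1 ∨ (x 0 i).imI = 1) ∧
      ((x 0 i).imJ = -1 ∨ (x 0 i).imJ = 1) ∧
      ((x 0 i).imK = -1 ∨ (x 0 i).imK = 1))
    (hdyn : ∀ t i,
      ((i = σ t ∧ (∑ j, w i j * x t j).re ≠ 0 ∧ (∑ j, w i j * x t j).imI ≠ 0 ∧
          (∑ j, w i j * x t j).imJ ≠ 0 ∧ (∑ j, w i j * x t j).imK ≠ 0) →
        x (t + 1) i = (⟨Real.sign (∑ j, w i j * x t j).re,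
          Real.sign (∑ j, w i j * x t j).imI,
          Real.sign (∑ j, w i j * x t j).imJ,
          Real.sign (∑ j, w i j * x t j).imK⟩ : Quaternion ℝ)) ∧
      (¬(i = σ t ∧ (∑ j, w i j * x t j).re ≠ 0 ∧ (∑ j, w i j * x t j).imI ≠ 0 ∧
          (∑ j, w i j * x t j).imJ ≠ 0 ∧ (∑ j, w i j * x t j).imK ≠ 0) →
        x (t + 1) i = x t i)) :
    ∃ T, ∀ t, T ≤ t → x t = x T := by
  have hstep : ∀ t, IsAsyncStep w (σ t) (x t) (x (t + 1)) := hdyn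
  have hsigns : ∀ t, x t ∈ Set.univ.pi fun _ => splitSigns := by
    intro t
    induction t with
    | zero => exact fun i _ => hx0 i
    | succ t ih => exact (hstep t).mem_pi_splitSigns ih
  have hfin : (Set.range x).Finite :=
    (Set.Finite.pi fun _ => splitSigns_finite).subset (Set.range_subset_iff.2 hsigns)
  exact exists_forall_ge_eq_of_finite_range hfin (energy w) fun t =>
    (hstep t).eq_or_energy_lt hsym (hdiag (σ t)) (hsigns t (σ t) (Set.mem_univ _))

theorem quaternion_split_sign_hopfield_convergence
    (N : ℕ) (hN : 1 ≤ N)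
    (w : Fin N → Fin N → Quaternion ℝ)
    (hsym : ∀ i j, w i j = star (w j i))
    (hdiag : ∀ i, ∃ r : ℝ, 0 ≤ r ∧ w i i = (r : Quaternion ℝ))
    (σ : ℕ → Fin N) (x : ℕ → Fin N → Quaternion ℝ)
    (hx0 : ∀ i, ((x 0 i).re = -1 ∨ (x 0 i).re = 1) ∧
      ((x 0 i).imI = -1 ∨ (x 0 i).imI = 1) ∧
      ((x 0 i).imJ = -1 ∨ (x 0 i).imJ = 1) ∧
      ((x 0 i).imK = -1 ∨ (x 0 i).imK = 1))
    (hdyn : ∀ t i,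
      ((i = σ t ∧ (∑ j, w i j * x t j).re ≠ 0 ∧ (∑ j, w i j * x t j).imI ≠ 0 ∧
          (∑ j, w i j * x t j).imJ ≠ 0 ∧ (∑ j, w i j * x t j).imK ≠ 0) →
        x (t + 1) i = (⟨Real.sign (∑ j, w i j * x t j).re,
          Real.sign (∑ j, w i j * x t j).imI,
          Real.sign (∑ j, w i j * x t j).imJ,
          Real.sign (∑ j, w i j * x t j).imK⟩ : Quaternion ℝ)) ∧
      (¬(i = σ t ∧ (∑ j, w i j * x t j).re ≠ 0 ∧ (∑ j, w i j * x t j).imI ≠ 0 ∧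
          (∑ j, w i j * x t j).imJ ≠ 0 ∧ (∑ j, w i j * x t j).imK ≠ 0) →
        x (t + 1) i = x t i)) :
    ∃ T, ∀ t, T ≤ t → x t = x T :=
  quaternion_split_sign_hopfield_convergence_general N w hsym hdiag σ x hx0 hdyn
end
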